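/- 𝒦-continuity of the t-step output map: Let the system be i-IOSS with functions β ∈ 𝒦ℒ, γ₁, γ₂ ∈ 𝒦, and let h be 𝒦-continuous with α_h ∈ 𝒦. Then for every t ∈ ℕ there exists α_{h_t} ∈ 𝒦 such that for all x₀₁, x₀₂ ∈ ℝⁿ and all input sequences w₁, w₂: |h(x(t; x₀₁, w₁)) − h(x(t; x₀₂, w₂))| ≤ α_{h_t}(|x₀₁ − x₀₂| + Σ_{τ=0}^{t−1} |w₁(τ) − w₂(τ)|). Consequently, for every finite t* ∈ ℕ there exists a single α̃_h ∈ 𝒦 such that this bound holds with α̃_h in place of α_{h_t} for all t < t*. -/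

import Mathlib

open Set Filter

noncomputable section

/-- `Vec m` is `ℝ^m` with the Euclidean norm. -/
abbrev Vec (m : ℕ) := EuclideanSpace ℝ (Fin m)

/-- A function `φ : ℝ≥0 → ℝ≥0` is of class 𝒦 (modeled on `ℝ`, restricted to `[0,∞)`):
continuous, strictly increasing and `φ 0 = 0`. -/
def IsClassK (φ : ℝ → ℝ) : Prop :=
  ContinuousOn φ (Ici 0) ∧ StrictMonoOn φ (Ici 0) ∧ φ 0 = 0

/-- A function `σ : ℕ → ℝ≥0` is of class ℒ: non-increasing with limit `0`. -/
def IsClassL (σ : ℕ → ℝ) : Prop :=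
  (∀ t, 0 ≤ σ t) ∧ Antitone σ ∧ Tendsto σ atTop (nhds 0)

/-- Class 𝒦ℒ. -/
def IsClassKL (β : ℝ → ℕ → ℝ) : Prop :=
  (∀ t, IsClassK fun s => β s t) ∧ ∀ s, 0 ≤ s → IsClassL fun t => β s t

/-- Solution map of `x(t+1) = f(x(t), w(t))`, `x(0) = x₀`. -/
def sol {n q : ℕ} (f : Vec n → Vec q → Vec n) (x0 : Vec n) (w : ℕ → Vec q) : ℕ → Vec n
  | 0 => x0
  | t + 1 => f (sol f x0 w t) (w t)

/-- `|Δx(t)|`. -/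
def nDx {n q : ℕ} (f : Vec n → Vec q → Vec n) (x01 x02 : Vec n) (w1 w2 : ℕ → Vec q)
    (t : ℕ) : ℝ :=
  ‖sol f x01 w1 t - sol f x02 w2 t‖

/-- `|Δh(Δx(t))|`. -/
def nDy {n q p : ℕ} (f : Vec n → Vec q → Vec n) (h : Vec n → Vec p)
    (x01 x02 : Vec n) (w1 w2 : ℕ → Vec q) (t : ℕ) : ℝ :=
  ‖h (sol f x01 w1 t) - h (sol f x02 w2 t)‖

/-- `|Δw(t)|`. -/
def nDw {q : ℕ} (w1 w2 : ℕ → Vec q) (t : ℕ) : ℝ := ‖w1 t - w2 t‖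

/-- `sup_{0 ≤ τ < t} g τ` (empty sup is `0` by the `Real.sSup` convention). -/
def supLt (t : ℕ) (g : ℕ → ℝ) : ℝ := sSup (g '' {τ | τ < t})

/-- `sup_{τ ∈ S, τ < t} g τ`. -/
def supMem (S : Set ℕ) (t : ℕ) (g : ℕ → ℝ) : ℝ := sSup (g '' {τ | τ ∈ S ∧ τ < t})

/-- Time-discounted max over `0 ≤ τ < t` of `β (g τ) (t - τ - 1)`. -/
def dmaxLt (t : ℕ) (g : ℕ → ℝ) (β : ℝ → ℕ → ℝ) : ℝ :=
  sSup ((fun τ => β (g τ) (t - τ - 1)) '' {τ | τ < t})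

/-- Time-discounted max over `τ ∈ S, τ < t` of `β (g τ) (t - τ - 1)`. -/
def dmaxMem (S : Set ℕ) (t : ℕ) (g : ℕ → ℝ) (β : ℝ → ℕ → ℝ) : ℝ :=
  sSup ((fun τ => β (g τ) (t - τ - 1)) '' {τ | τ ∈ S ∧ τ < t})

/-- `t^i_j = δ_i + ⋯ + δ_{i+j-1}` (the sequence `δ` is 1-based; `δ 0` is unused). -/
def sampT (δ : ℕ → ℕ) (i j : ℕ) : ℕ := ∑ r ∈ Finset.range j, δ (i + r)

/-- The sampling set `K_i = {t^i_j : j ≥ 1}`. -/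
def sampSet (δ : ℕ → ℕ) (i : ℕ) : Set ℕ := {m | ∃ j, 1 ≤ j ∧ m = sampT δ i j}

/-- The i-IOSS bound with given comparison functions. -/
def iIOSSBound {n q p : ℕ} (f : Vec n → Vec q → Vec n) (h : Vec n → Vec p)
    (β : ℝ → ℕ → ℝ) (γ1 γ2 : ℝ → ℝ) : Prop :=
  ∀ x01 x02 w1 w2 t,
    nDx f x01 x02 w1 w2 t ≤
      max (β ‖x01 - x02‖ t)
        (max (γ1 (supLt t (nDw w1 w2))) (γ2 (supLt t (nDy f h x01 x02 w1 w2))))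

/-- The sample-based i-IOSS bound w.r.t. the sampling set generated by `δ`. -/
def sampledIOSSBound {n q p : ℕ} (f : Vec n → Vec q → Vec n) (h : Vec n → Vec p)
    (δ : ℕ → ℕ) (β : ℝ → ℕ → ℝ) (γ1 γ2 : ℝ → ℝ) : Prop :=
  ∀ i, 1 ≤ i → ∀ x01 x02 w1 w2 t,
    nDx f x01 x02 w1 w2 t ≤
      max (β ‖x01 - x02‖ t)
        (max (γ1 (supLt t (nDw w1 w2)))
             (γ2 (supMem (sampSet δ i) t (nDy f h x01 x02 w1 w2))))

/-- The sample-based i-IOSS bound on an input set `W`. -/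
def sampledIOSSBoundOn {n q p : ℕ} (f : Vec n → Vec q → Vec n) (h : Vec n → Vec p)
    (W : Set (ℕ → Vec q)) (δ : ℕ → ℕ) (β : ℝ → ℕ → ℝ) (γ1 γ2 : ℝ → ℝ) : Prop :=
  ∀ i, 1 ≤ i → ∀ x01 x02, ∀ w1 ∈ W, ∀ w2 ∈ W, ∀ t,
    nDx f x01 x02 w1 w2 t ≤
      max (β ‖x01 - x02‖ t)
        (max (γ1 (supLt t (nDw w1 w2)))
             (γ2 (supMem (sampSet δ i) t (nDy f h x01 x02 w1 w2))))

/-- The sample-based time-discounted i-IOSS bound. -/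
def sampledTDBound {n q p : ℕ} (f : Vec n → Vec q → Vec n) (h : Vec n → Vec p)
    (δ : ℕ → ℕ) (βx βu βy : ℝ → ℕ → ℝ) : Prop :=
  ∀ i, 1 ≤ i → ∀ x01 x02 w1 w2 t,
    nDx f x01 x02 w1 w2 t ≤
      max (βx ‖x01 - x02‖ t)
        (max (dmaxLt t (nDw w1 w2) βu)
             (dmaxMem (sampSet δ i) t (nDy f h x01 x02 w1 w2) βy))

/-- The sample-based time-discounted i-IOSS bound on an input set `W`. -/
def sampledTDBoundOn {n q p : ℕ} (f : Vec n → Vec q → Vec n) (h : Vec n → Vec p)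
    (W : Set (ℕ → Vec q)) (δ : ℕ → ℕ) (βx βu βy : ℝ → ℕ → ℝ) : Prop :=
  ∀ i, 1 ≤ i → ∀ x01 x02, ∀ w1 ∈ W, ∀ w2 ∈ W, ∀ t,
    nDx f x01 x02 w1 w2 t ≤
      max (βx ‖x01 - x02‖ t)
        (max (dmaxLt t (nDw w1 w2) βu)
             (dmaxMem (sampSet δ i) t (nDy f h x01 x02 w1 w2) βy))

/-- `(x₀₁, x₀₂, w₁, w₂)` generates a pair of i-ISS trajectories relative to `(β, γ1, σ1)`. -/
def pairISS {n q : ℕ} (f : Vec n → Vec q → Vec n) (β : ℝ → ℕ → ℝ) (γ1 : ℝ → ℝ)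
    (σ1 : ℕ → ℝ) (x01 x02 : Vec n) (w1 w2 : ℕ → Vec q) : Prop :=
  ∀ t, nDx f x01 x02 w1 w2 t ≤
    max (β ‖x01 - x02‖ t)
      (sSup ((fun τ => γ1 (nDw w1 w2 τ) * σ1 (t - τ - 1)) '' {τ | τ < t}))

/-!
Induction on the horizon: if every `|Δx(τ)|`, `τ ≤ t`, is bounded by a 𝒦-function of
`|Δx₀| + Σ_{τ<t+1} |Δw(τ)|`, then so are the past outputs through `α_h`, and the i-IOSS estimate at
time `t + 1` bounds `|Δx(t+1)|` by `β(·, 0) + γ₁ + γ₂ ∘ α_h ∘ ψ` of the same quantity. Composing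
with `α_h` gives the output bound, and finitely many horizons are covered by the sum of their
comparison functions.
-/

lemma isClassK_id : IsClassK fun s : ℝ => s :=
  ⟨continuousOn_id, fun _ _ _ _ h => h, rfl⟩

namespace IsClassK

variable {φ ψ : ℝ → ℝ}

lemma mono (hφ : IsClassK φ) {a b : ℝ} (ha : 0 ≤ a) (hab : a ≤ b) : φ a ≤ φ b :=
  hφ.2.1.monotoneOn ha (ha.trans hab) hab

lemma nonneg (hφ : IsClassK φ) {a : ℝ} (ha : 0 ≤ a) : 0 ≤ φ a :=
  hφ.2.2 ▸ hφ.mono le_rfl ha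

lemma add (hφ : IsClassK φ) (hψ : IsClassK ψ) : IsClassK fun s => φ s + ψ s :=
  ⟨hφ.1.add hψ.1, fun _ ha _ hb hab => add_lt_add (hφ.2.1 ha hb hab) (hψ.2.1 ha hb hab),
    by simp [hφ.2.2, hψ.2.2]⟩

lemma comp (hφ : IsClassK φ) (hψ : IsClassK ψ) : IsClassK fun s => φ (ψ s) :=
  ⟨hφ.1.comp hψ.1 fun _ hs => hψ.nonneg hs,
    fun _ ha _ hb hab => hφ.2.1 (hψ.nonneg ha) (hψ.nonneg hb) (hψ.2.1 ha hb hab),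
    by simp [hψ.2.2, hφ.2.2]⟩

lemma add_sum {ι : Type*} (hψ : IsClassK ψ) (F : Finset ι) {g : ι → ℝ → ℝ}
    (hg : ∀ i ∈ F, IsClassK (g i)) : IsClassK fun s => ψ s + ∑ i ∈ F, g i s := by
  classical
  induction F using Finset.induction with
  | empty => simpa using hψ
  | insert a F ha ih =>
    have hF := (hg a (F.mem_insert_self a)).add (ih fun i hi => hg i (F.mem_insert_of_mem hi))
    convert hF using 2 with s
    rw [Finset.sum_insert ha]
    ring

lemma exists_ge_of_finset {ι : Type*} (F : Finset ι) {g : ι → ℝ → ℝ}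
    (hg : ∀ i ∈ F, IsClassK (g i)) :
    ∃ α, IsClassK α ∧ ∀ i ∈ F, ∀ s, 0 ≤ s → g i s ≤ α s := by
  -- the identity summand keeps the bound strictly increasing when `F` is empty
  refine ⟨fun s => s + ∑ i ∈ F, g i s, isClassK_id.add_sum F hg, fun i hi s hs => ?_⟩
  have hsum : g i s ≤ ∑ j ∈ F, g j s :=
    Finset.single_le_sum (fun j hj => (hg j hj).nonneg hs) hi
  linarith

end IsClassK

lemma IsClassKL.le_apply_zero {β : ℝ → ℕ → ℝ} (hβ : IsClassKL β) {s : ℝ} (hs : 0 ≤ s) (t : ℕ) :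
    β s t ≤ β s 0 :=
  (hβ.2 s hs).2.1 t.zero_le

lemma supLt_nonneg {t : ℕ} {g : ℕ → ℝ} (hg : ∀ τ, 0 ≤ g τ) : 0 ≤ supLt t g :=
  Real.sSup_nonneg <| by rintro _ ⟨τ, -, rfl⟩; exact hg τ

lemma supLt_le {t : ℕ} {g : ℕ → ℝ} {c : ℝ} (hc : 0 ≤ c) (hg : ∀ τ < t, g τ ≤ c) :
    supLt t g ≤ c :=
  Real.sSup_le (by rintro _ ⟨τ, hτ, rfl⟩; exact hg τ hτ) hc

def perturbation {n q : ℕ} (x01 x02 : Vec n) (w1 w2 : ℕ → Vec q) (t : ℕ) : ℝ :=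
  ‖x01 - x02‖ + ∑ τ ∈ Finset.range t, nDw w1 w2 τ

section perturbation

variable {n q : ℕ} {x01 x02 : Vec n} {w1 w2 : ℕ → Vec q}

lemma sum_nDw_nonneg (t : ℕ) : 0 ≤ ∑ τ ∈ Finset.range t, nDw w1 w2 τ :=
  Finset.sum_nonneg fun _ _ => norm_nonneg _

lemma perturbation_nonneg (t : ℕ) : 0 ≤ perturbation x01 x02 w1 w2 t :=
  add_nonneg (norm_nonneg _) (sum_nDw_nonneg t)

lemma norm_sub_le_perturbation (t : ℕ) : ‖x01 - x02‖ ≤ perturbation x01 x02 w1 w2 t :=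
  le_add_of_nonneg_right (sum_nDw_nonneg t)

lemma nDw_le_perturbation {τ t : ℕ} (hτ : τ < t) : nDw w1 w2 τ ≤ perturbation x01 x02 w1 w2 t :=
  (Finset.single_le_sum (f := nDw w1 w2) (fun _ _ => norm_nonneg _) (Finset.mem_range.2 hτ)).trans
    (le_add_of_nonneg_left (norm_nonneg _))

lemma perturbation_mono {t t' : ℕ} (h : t ≤ t') :
    perturbation x01 x02 w1 w2 t ≤ perturbation x01 x02 w1 w2 t' :=
  add_le_add_right (Finset.sum_le_sum_of_subset_of_nonneg (Finset.range_subset_range.2 h)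
    fun _ _ _ => norm_nonneg _) _

end perturbation

section iIOSS

variable {n q p : ℕ} {f : Vec n → Vec q → Vec n} {h : Vec n → Vec p} {β : ℝ → ℕ → ℝ}
  {γ1 γ2 αh : ℝ → ℝ}

lemma nDx_succ_le (hβ : IsClassKL β) (hγ1 : IsClassK γ1) (hγ2 : IsClassK γ2)
    (hiIOSS : iIOSSBound f h β γ1 γ2) (hαh : IsClassK αh)
    (hKcont : ∀ x1 x2 : Vec n, ‖h x1 - h x2‖ ≤ αh ‖x1 - x2‖)
    (x01 x02 : Vec n) (w1 w2 : ℕ → Vec q) {t : ℕ} {R : ℝ} (hR : 0 ≤ R)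
    (hpast : ∀ τ ≤ t, nDx f x01 x02 w1 w2 τ ≤ R) :
    nDx f x01 x02 w1 w2 (t + 1) ≤
      max (β (perturbation x01 x02 w1 w2 (t + 1)) 0)
        (max (γ1 (perturbation x01 x02 w1 w2 (t + 1))) (γ2 (αh R))) := by
  set P := perturbation x01 x02 w1 w2 (t + 1)
  have hinit : β ‖x01 - x02‖ (t + 1) ≤ β P 0 :=
    (hβ.le_apply_zero (norm_nonneg _) _).trans
      ((hβ.1 0).mono (norm_nonneg _) (norm_sub_le_perturbation _))
  have hinput : γ1 (supLt (t + 1) (nDw w1 w2)) ≤ γ1 P :=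
    hγ1.mono (supLt_nonneg fun _ => norm_nonneg _)
      (supLt_le (perturbation_nonneg _) fun _ hτ => nDw_le_perturbation hτ)
  have houtput : γ2 (supLt (t + 1) (nDy f h x01 x02 w1 w2)) ≤ γ2 (αh R) :=
    hγ2.mono (supLt_nonneg fun _ => norm_nonneg _)
      (supLt_le (hαh.nonneg hR) fun τ hτ =>
        (hKcont _ _).trans (hαh.mono (norm_nonneg _) (hpast τ (Nat.lt_succ_iff.1 hτ))))
  exact (hiIOSS x01 x02 w1 w2 (t + 1)).trans (max_le_max hinit (max_le_max hinput houtput))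

lemma exists_isClassK_nDx_le (hβ : IsClassKL β) (hγ1 : IsClassK γ1) (hγ2 : IsClassK γ2)
    (hiIOSS : iIOSSBound f h β γ1 γ2) (hαh : IsClassK αh)
    (hKcont : ∀ x1 x2 : Vec n, ‖h x1 - h x2‖ ≤ αh ‖x1 - x2‖) (t : ℕ) :
    ∃ ψ, IsClassK ψ ∧ ∀ (x01 x02 : Vec n) (w1 w2 : ℕ → Vec q), ∀ τ ≤ t,
      nDx f x01 x02 w1 w2 τ ≤ ψ (perturbation x01 x02 w1 w2 t) := by
  induction t with
  | zero =>
    refine ⟨fun s => s, isClassK_id, fun x01 x02 w1 w2 τ hτ => ?_⟩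
    obtain rfl := Nat.le_zero.1 hτ
    simp [nDx, sol, perturbation]
  | succ t ih =>
    obtain ⟨ψ, hψ, hbound⟩ := ih
    refine ⟨fun s => ψ s + (β s 0 + (γ1 s + γ2 (αh (ψ s)))),
      hψ.add ((hβ.1 0).add (hγ1.add (hγ2.comp (hαh.comp hψ)))), fun x01 x02 w1 w2 τ hτ => ?_⟩
    set P := perturbation x01 x02 w1 w2 (t + 1)
    have hP : 0 ≤ P := perturbation_nonneg _
    have hpast : ∀ τ ≤ t, nDx f x01 x02 w1 w2 τ ≤ ψ P := fun τ hτ =>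
      (hbound x01 x02 w1 w2 τ hτ).trans
        (hψ.mono (perturbation_nonneg _) (perturbation_mono t.le_succ))
    have hβP := (hβ.1 0).nonneg hP
    have hγ1P := hγ1.nonneg hP
    have hψP := hψ.nonneg hP
    have hγ2P := hγ2.nonneg (hαh.nonneg hψP)
    rcases Nat.lt_or_ge τ (t + 1) with hlt | hge
    · have := hpast τ (Nat.lt_succ_iff.1 hlt)
      linarith
    · obtain rfl : τ = t + 1 := le_antisymm hτ hge
      refine (nDx_succ_le hβ hγ1 hγ2 hiIOSS hαh hKcont x01 x02 w1 w2 hψP hpast).trans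
        (max_le ?_ (max_le ?_ ?_)) <;> linarith

end iIOSS

/-- 𝒦-continuity of the `t`-step output map, and a uniform bound on any finite horizon. -/
theorem t_step_output_map_K_continuous {n q p : ℕ}
    (f : Vec n → Vec q → Vec n) (h : Vec n → Vec p)
    (β : ℝ → ℕ → ℝ) (γ1 γ2 : ℝ → ℝ)
    (hβ : IsClassKL β) (hγ1 : IsClassK γ1) (hγ2 : IsClassK γ2)
    (hiIOSS : iIOSSBound f h β γ1 γ2)
    (αh : ℝ → ℝ) (hαh : IsClassK αh)
    (hKcont : ∀ x1 x2 : Vec n, ‖h x1 - h x2‖ ≤ αh ‖x1 - x2‖) :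
    (∀ t : ℕ, ∃ αht : ℝ → ℝ, IsClassK αht ∧
      ∀ (x01 x02 : Vec n) (w1 w2 : ℕ → Vec q),
        ‖h (sol f x01 w1 t) - h (sol f x02 w2 t)‖ ≤
          αht (‖x01 - x02‖ + ∑ τ ∈ Finset.range t, ‖w1 τ - w2 τ‖)) ∧
    ∀ tstar : ℕ, ∃ αt : ℝ → ℝ, IsClassK αt ∧
      ∀ t, t < tstar → ∀ (x01 x02 : Vec n) (w1 w2 : ℕ → Vec q),
        ‖h (sol f x01 w1 t) - h (sol f x02 w2 t)‖ ≤
          αt (‖x01 - x02‖ + ∑ τ ∈ Finset.range t, ‖w1 τ - w2 τ‖) := by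
  have houtput : ∀ t : ℕ, ∃ αht : ℝ → ℝ, IsClassK αht ∧
      ∀ (x01 x02 : Vec n) (w1 w2 : ℕ → Vec q),
        ‖h (sol f x01 w1 t) - h (sol f x02 w2 t)‖ ≤ αht (perturbation x01 x02 w1 w2 t) := by
    intro t
    obtain ⟨ψ, hψ, hstate⟩ := exists_isClassK_nDx_le hβ hγ1 hγ2 hiIOSS hαh hKcont (q := q) t
    exact ⟨fun s => αh (ψ s), hαh.comp hψ, fun x01 x02 w1 w2 =>
      (hKcont _ _).trans (hαh.mono (norm_nonneg _) (hstate x01 x02 w1 w2 t le_rfl))⟩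
  refine ⟨houtput, fun tstar => ?_⟩
  choose αht hαht hbound using houtput
  obtain ⟨αt, hαt, hge⟩ :=
    IsClassK.exists_ge_of_finset (Finset.range tstar) fun t _ => hαht t
  exact ⟨αt, hαt, fun t ht x01 x02 w1 w2 => (hbound t x01 x02 w1 w2).trans
    (hge t (Finset.mem_range.2 ht) _ (perturbation_nonneg t))⟩
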